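/- Let G be a torsion-free group in which every abelian subgroup is cyclic, and let φ : ℤ × ℤ → G be a group homomorphism. Then the kernel of φ contains a primitive element of ℤ × ℤ, i.e. a nonzero element (p,q) with gcd(p,q) = 1. -/

import Mathlib

/-! The image of `ℤ × ℤ` is an abelian subgroup, hence cyclic, say generated by `c`. Writing the
images of the two basis vectors as `c ^ m` and `c ^ n`, the kernel contains every `(p, q)` with
`m * p + n * q = 0`, and this line in `ℤ²` always contains a primitive vector. -/

/-- Old Mathlib definition (removed upstream): a monoid is torsion-free if no nontrivial
element has finite order. -/
def Monoid.IsTorsionFree (G : Type*) [Monoid G] : Prop :=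
  ∀ g : G, g ≠ 1 → ¬IsOfFinOrder g

theorem Int.exists_gcd_eq_one_mul_add_mul_eq_zero (m n : ℤ) :
    ∃ p q : ℤ, Int.gcd p q = 1 ∧ m * p + n * q = 0 := by
  rcases Nat.eq_zero_or_pos (Int.gcd m n) with h0 | hpos
  · obtain ⟨rfl, rfl⟩ := Int.gcd_eq_zero_iff.mp h0
    exact ⟨1, 0, by decide, by ring⟩
  · obtain ⟨g, m', n', -, hcop, rfl, rfl⟩ := Int.exists_gcd_one' hpos
    refine ⟨n', -m', ?_, by ring⟩
    rw [Int.gcd_neg, Int.gcd_comm, hcop]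

theorem MonoidHom.map_ofAdd_prod {G : Type*} [Group G] (φ : Multiplicative (ℤ × ℤ) →* G)
    (p q : ℤ) :
    φ (Multiplicative.ofAdd (p, q)) =
      φ (Multiplicative.ofAdd (1, 0)) ^ p * φ (Multiplicative.ofAdd (0, 1)) ^ q := by
  have hpq : ((p, q) : ℤ × ℤ) = p • ((1, 0) : ℤ × ℤ) + q • ((0, 1) : ℤ × ℤ) := by
    simp
  rw [hpq, ofAdd_add, ofAdd_zsmul, ofAdd_zsmul, map_mul, map_zpow, map_zpow]

theorem MonoidHom.range_mul_comm {M G : Type*} [CommGroup M] [Group G] (φ : M →* G) :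
    ∀ x ∈ φ.range, ∀ y ∈ φ.range, x * y = y * x := by
  rintro _ ⟨u, rfl⟩ _ ⟨v, rfl⟩
  rw [← map_mul, mul_comm, map_mul]

theorem stmt_3_general {G : Type*} [Group G]
    (hcyc : ∀ H : Subgroup G, (∀ x ∈ H, ∀ y ∈ H, x * y = y * x) → IsCyclic H)
    (φ : Multiplicative (ℤ × ℤ) →* G) :
    ∃ p q : ℤ, (p, q) ≠ (0, 0) ∧ Int.gcd p q = 1 ∧
      Multiplicative.ofAdd ((p, q) : ℤ × ℤ) ∈ φ.ker := by
  obtain ⟨c, hc⟩ := (φ.range.isCyclic_iff_exists_zpowers_eq_top).mp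
    (hcyc φ.range φ.range_mul_comm)
  have hmem (v : ℤ × ℤ) : φ (Multiplicative.ofAdd v) ∈ Subgroup.zpowers c :=
    hc ▸ ⟨_, rfl⟩
  obtain ⟨m, hm⟩ := Subgroup.mem_zpowers_iff.mp (hmem (1, 0))
  obtain ⟨n, hn⟩ := Subgroup.mem_zpowers_iff.mp (hmem (0, 1))
  obtain ⟨p, q, hcop, hpq⟩ := Int.exists_gcd_eq_one_mul_add_mul_eq_zero m n
  refine ⟨p, q, ?_, hcop, ?_⟩
  · rintro ⟨⟩
    exact absurd hcop (by decide)
  · rw [MonoidHom.mem_ker, φ.map_ofAdd_prod, ← hm, ← hn, ← zpow_mul, ← zpow_mul, ← zpow_add, hpq,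
      zpow_zero]

/-- If `G` is torsion-free and every abelian subgroup of `G` is cyclic, then the kernel of
any group homomorphism `ℤ × ℤ → G` contains a primitive element `(p,q)`
(nonzero with coprime coordinates). -/
theorem stmt_3 {G : Type*} [Group G]
    (htf : Monoid.IsTorsionFree G)
    (hcyc : ∀ H : Subgroup G, (∀ x ∈ H, ∀ y ∈ H, x * y = y * x) → IsCyclic H)
    (φ : Multiplicative (ℤ × ℤ) →* G) :
    ∃ p q : ℤ, (p, q) ≠ (0, 0) ∧ Int.gcd p q = 1 ∧
      Multiplicative.ofAdd ((p, q) : ℤ × ℤ) ∈ φ.ker :=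
  stmt_3_general hcyc φ
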